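/- arXiv:1804.01859 — 2 statements merged into one kernel-verified Lean document; each statement's English description precedes it below -/
import Mathlib

section
/- Let V = {1,…,n} and let λ = (λ_1,…,λ_k) be an integer sequence with 0 < λ_1 < ⋯ < λ_k ≤ n. If the symmetric hypergraph 𝓗(λ) is minimal transversal-free, then λ_1 + λ_k = n. -/
/-! A hyperedge `H` of size `λ_k` is not a transversal, so some hyperedge, of size at least `λ_1`,
avoids it: `λ_1 + λ_k ≤ n`. Conversely, if `λ_1 + λ_k < n`, delete one vertex: on the remaining
`n - 1 ≥ λ_1 + λ_k` vertices every hyperedge `H` misses at least `λ_1` vertices, which contain a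
hyperedge disjoint from `H`. So the induced subhypergraph is still transversal-free, contradicting
minimality. -/

open Finset

/-- An `H`-move in hypergraph NIM: strictly decrease every pile in `H`, keep others. -/
def HMove {n : ℕ} (H : Finset (Fin n)) (x x' : Fin n → ℕ) : Prop :=
  (∀ i ∈ H, x' i < x i) ∧ ∀ i ∉ H, x' i = x i

/-- A move in `NIM_𝓗`: an `H`-move for some hyperedge `H ∈ 𝓗`. -/
def Move {n : ℕ} (F : Set (Finset (Fin n))) (x x' : Fin n → ℕ) : Prop :=
  ∃ H ∈ F, HMove H x x'

/-- Minimal excludant of a set of naturals. -/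
noncomputable def mex (S : Set ℕ) : ℕ := sInf {g : ℕ | g ∉ S}

/-- The Sprague–Grundy function of `NIM_𝓗`, defined by well-founded recursion.
(The guard `∑ x' < ∑ x` is automatic whenever `∅ ∉ 𝓗`.) -/
noncomputable def grundy {n : ℕ} (F : Set (Finset (Fin n))) (x : Fin n → ℕ) : ℕ :=
  mex {g : ℕ | ∃ x', ∃ _h : Move F x x' ∧ (∑ i, x' i) < ∑ i, x i, grundy F x' = g}
termination_by ∑ i, x i
decreasing_by exact _h.2

/-- `N` consecutive moves are possible from `x`: there are hyperedges `H¹,…,H^N ∈ 𝓗`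
whose partial sums of characteristic vectors stay `≤ x`. -/
def TetrisReach {n : ℕ} (F : Set (Finset (Fin n))) (x : Fin n → ℕ) (N : ℕ) : Prop :=
  ∃ f : ℕ → Finset (Fin n), (∀ j < N, f j ∈ F) ∧
    ∀ j < N, ∀ i, (∑ l ∈ Finset.range (j + 1), if i ∈ f l then 1 else 0) ≤ x i

/-- The Tetris function: the largest `N` with `TetrisReach`. -/
noncomputable def tetris {n : ℕ} (F : Set (Finset (Fin n))) (x : Fin n → ℕ) : ℕ :=
  sSup {N | TetrisReach F x N}

/-- `m(x)`: the minimum pile size. -/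
noncomputable def mval {n : ℕ} (x : Fin n → ℕ) : ℕ := sInf (Set.range x)

/-- `y_𝓗(x) = 𝒯_𝓗(x − m(x)e) + 1`. -/
noncomputable def yval {n : ℕ} (F : Set (Finset (Fin n))) (x : Fin n → ℕ) : ℕ :=
  tetris F (fun i => x i - mval x) + 1

/-- `v_𝓗(x)`. -/
noncomputable def vval {n : ℕ} (F : Set (Finset (Fin n))) (x : Fin n → ℕ) : ℕ :=
  Nat.choose (yval F x) 2 + ((mval x - Nat.choose (yval F x) 2 - 1) % yval F x)

/-- A position is long if `m(x) ≤ C(y_𝓗(x), 2)`. -/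
noncomputable def IsLong {n : ℕ} (F : Set (Finset (Fin n))) (x : Fin n → ℕ) : Prop :=
  mval x ≤ Nat.choose (yval F x) 2

/-- The Jenkyns–Mayberry function `𝒰_𝓗`. -/
noncomputable def jmU {n : ℕ} (F : Set (Finset (Fin n))) (x : Fin n → ℕ) : ℕ :=
  if mval x ≤ Nat.choose (yval F x) 2 then tetris F x else vval F x

/-- `𝓗` is a JM hypergraph if its SG function is given by the JM formula. -/
def IsJM {n : ℕ} (F : Set (Finset (Fin n))) : Prop :=
  ∀ x : Fin n → ℕ, grundy F x = jmU F x

/-- `T` is a transversal of `𝓗` if it meets every hyperedge. -/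
def IsTransversal {n : ℕ} (F : Set (Finset (Fin n))) (T : Finset (Fin n)) : Prop :=
  ∀ H ∈ F, (T ∩ H).Nonempty

/-- `𝓗` is transversal-free if no hyperedge is a transversal. -/
def TransversalFree {n : ℕ} (F : Set (Finset (Fin n))) : Prop :=
  ∀ H ∈ F, ¬ IsTransversal F H

/-- The induced subhypergraph `𝓗_S`. -/
def inducedH {n : ℕ} (F : Set (Finset (Fin n))) (S : Finset (Fin n)) : Set (Finset (Fin n)) :=
  {H | H ∈ F ∧ H ⊆ S}

/-- `𝓗` is minimal transversal-free. -/
def MinTransversalFree {n : ℕ} (F : Set (Finset (Fin n))) : Prop :=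
  TransversalFree F ∧
    ∀ S : Finset (Fin n), S ⊂ Finset.univ → (inducedH F S).Nonempty →
      ¬ TransversalFree (inducedH F S)

/-- The symmetric hypergraph `𝓗(λ)` of a spectrum `λ₁ < ⋯ < λ_k` (1-indexed). -/
def Hlambda {n : ℕ} (k : ℕ) (gl : ℕ → ℕ) : Set (Finset (Fin n)) :=
  {H | ∃ j, 1 ≤ j ∧ j ≤ k ∧ H.card = gl j}

section Transversal

variable {n : ℕ} {F : Set (Finset (Fin n))}

lemma exists_disjoint_of_not_isTransversal {H : Finset (Fin n)}
    (h : ¬ IsTransversal F H) : ∃ H' ∈ F, Disjoint H H' := by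
  simp only [IsTransversal, not_forall, not_nonempty_iff_eq_empty] at h
  obtain ⟨H', hH', hempty⟩ := h
  exact ⟨H', hH', disjoint_iff_inter_eq_empty.mpr hempty⟩

lemma card_add_card_le_of_not_isTransversal {H : Finset (Fin n)}
    (h : ¬ IsTransversal F H) : ∃ H' ∈ F, H.card + H'.card ≤ n := by
  obtain ⟨H', hH', hdisj⟩ := exists_disjoint_of_not_isTransversal h
  refine ⟨H', hH', ?_⟩
  simpa [← card_union_of_disjoint hdisj] using card_le_univ (H ∪ H')

lemma not_isTransversal_of_le_card_sdiff {S H : Finset (Fin n)} {a : ℕ}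
    (hF : ∀ T ⊆ S, T.card = a → T ∈ F) (h : a ≤ (S \ H).card) : ¬ IsTransversal F H := by
  obtain ⟨T, hTsub, hTcard⟩ := exists_subset_card_eq h
  intro htr
  obtain ⟨x, hx⟩ := htr T (hF T (hTsub.trans sdiff_subset) hTcard)
  exact (mem_sdiff.mp (hTsub (mem_inter.mp hx).2)).2 (mem_inter.mp hx).1

end Transversal

section Hlambda

variable {n k : ℕ} {gl : ℕ → ℕ}

lemma Hlambda_card_mem_Icc (hmono : ∀ i, 1 ≤ i → i < k → gl i < gl (i + 1))
    {H : Finset (Fin n)} (hH : H ∈ Hlambda k gl) : gl 1 ≤ H.card ∧ H.card ≤ gl k := by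
  have hmon : MonotoneOn gl (Set.Icc 1 k) :=
    (strictMonoOn_of_lt_add_one Set.ordConnected_Icc
      fun i _ hi hi' => hmono i hi.1 hi'.2).monotoneOn
  obtain ⟨j, hj1, hjk, hcard⟩ := hH
  rw [hcard]
  exact ⟨hmon ⟨le_rfl, hj1.trans hjk⟩ ⟨hj1, hjk⟩ hj1, hmon ⟨hj1, hjk⟩ ⟨hj1.trans hjk, le_rfl⟩ hjk⟩

lemma Hlambda_add_le_of_transversalFree (hk : 1 ≤ k)
    (hmono : ∀ i, 1 ≤ i → i < k → gl i < gl (i + 1)) (hle : gl k ≤ n)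
    (hfree : TransversalFree (Hlambda (n := n) k gl)) : gl 1 + gl k ≤ n := by
  obtain ⟨H, -, hHcard⟩ :=
    exists_subset_card_eq (s := (univ : Finset (Fin n))) (n := gl k) (by simpa using hle)
  obtain ⟨H', hH', hsum⟩ := card_add_card_le_of_not_isTransversal (hfree H ⟨k, hk, le_rfl, hHcard⟩)
  have := (Hlambda_card_mem_Icc hmono hH').1
  omega

lemma transversalFree_inducedH_Hlambda (hk : 1 ≤ k)
    (hmono : ∀ i, 1 ≤ i → i < k → gl i < gl (i + 1)) {S : Finset (Fin n)}
    (hS : gl 1 + gl k ≤ S.card) : TransversalFree (inducedH (Hlambda (n := n) k gl) S) := by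
  rintro H ⟨hH, hHS⟩
  refine not_isTransversal_of_le_card_sdiff (S := S) (a := gl 1)
    (fun T hTS hT => ⟨⟨1, le_rfl, hk, hT⟩, hTS⟩) ?_
  have := (Hlambda_card_mem_Icc hmono hH).2
  rw [card_sdiff_of_subset hHS]
  omega

end Hlambda

theorem Hlambda_minTransversalFree_sum_general
    (n k : ℕ) (gl : ℕ → ℕ) (hk : 1 ≤ k)
    (hmono : ∀ i, 1 ≤ i → i < k → gl i < gl (i + 1)) (hle : gl k ≤ n)
    (hmin : MinTransversalFree (Hlambda (n := n) k gl)) :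
    gl 1 + gl k = n := by
  have hsum_le := Hlambda_add_le_of_transversalFree hk hmono hle hmin.1
  by_contra hne
  have hn : 0 < n := by omega
  set S := univ.erase (⟨0, hn⟩ : Fin n)
  have hScard : S.card = n - 1 := by simp [S]
  have hfree := transversalFree_inducedH_Hlambda hk hmono (S := S) (by omega)
  obtain ⟨H₀, hH₀S, hH₀card⟩ := exists_subset_card_eq (s := S) (n := gl 1) (by omega)
  exact hmin.2 S (erase_ssubset (mem_univ _)) ⟨H₀, ⟨1, le_rfl, hk, hH₀card⟩, hH₀S⟩ hfree

/-- If `𝓗(λ)` is minimal transversal-free, then `λ_1 + λ_k = n`. -/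
theorem Hlambda_minTransversalFree_sum
    (n k : ℕ) (gl : ℕ → ℕ) (hk : 1 ≤ k) (hpos : 0 < gl 1)
    (hmono : ∀ i, 1 ≤ i → i < k → gl i < gl (i + 1)) (hle : gl k ≤ n)
    (hmin : MinTransversalFree (Hlambda (n := n) k gl)) :
    gl 1 + gl k = n :=
  Hlambda_minTransversalFree_sum_general n k gl hk hmono hle hmin
end

section
/- Let V = {1,…,n} and let 𝓗 ⊆ 2^V be a hypergraph with 𝓗 ≠ ∅ and ∅ ∉ 𝓗. Suppose the following four conditions hold: (A0) 𝓗 is transversal-free; (B1) for every long position x ∈ ℤ_{≥0}^V and every integer z with m(x) ≤ z < 𝒯_𝓗(x) there exists a move x → x' such that x' is long and 𝒯_𝓗(x') = z; (C2) for every position x and every integer η with 1 ≤ η < y_𝓗(x) there exists a move x → x' such that m(x') = m(x) and y_𝓗(x') = η; (C3) for every position x and all integers μ, η with 0 ≤ μ < m(x) and m(x) − μ + 1 ≤ η ≤ y_𝓗(x) there exists a move x → x' such that m(x') = μ and y_𝓗(x') = η. Then 𝓗 is a JM hypergraph. -/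
open Finset

/-!
By the mex characterisation of the Sprague–Grundy function it suffices that `𝒰` takes every
value `g < 𝒰(x)` on some option of `x` and never the value `𝒰(x)` itself.

A value `g` with `C(η,2) ≤ g < C(η+1,2)` equals `v(x')` whenever `y(x') = η`, `m(x') > g` and
`m(x') ≡ g + 1 (mod η)`; conditions (C2) and (C3) supply such an option when `g < m(x)`, and
for long `x` condition (B1) covers `m(x) ≤ g < 𝒯(x)`.

Conversely `𝒯` strictly decreases along moves and `v(x') < m(x') ≤ m(x) ≤ 𝒯(x)`. Since `𝓗` is
transversal-free, some hyperedge avoids the piles touched by a move `x → x'` and can then be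
played `m(x) - m(x')` times from `x' - m(x')e`, so `y(x') > m(x) - m(x')`. This separates a
short `x` from a long option, and two short positions with equal `v` have equal `y` and
`m(x) ≡ m(x') (mod y)`, impossible for `0 < m(x) - m(x') < y`.
-/

lemma choose_two_succ (t : ℕ) : (t + 1).choose 2 = t.choose 2 + t := by
  simp [Nat.choose_succ_succ', add_comm]

lemma exists_choose_two_le_lt (g : ℕ) : ∃ η, 1 ≤ η ∧ η.choose 2 ≤ g ∧ g < η.choose 2 + η := by
  induction g with
  | zero => exact ⟨1, le_rfl, by simp, by simp⟩
  | succ g ih =>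
    obtain ⟨η, hη, hle, hlt⟩ := ih
    by_cases h : g + 1 < η.choose 2 + η
    · exact ⟨η, hη, by omega, h⟩
    · refine ⟨η + 1, by omega, ?_, ?_⟩ <;> rw [choose_two_succ] <;> omega

lemma eq_of_choose_two_le_lt {a b v : ℕ} (ha : a.choose 2 ≤ v) (ha' : v < a.choose 2 + a)
    (hb : b.choose 2 ≤ v) (hb' : v < b.choose 2 + b) : a = b := by
  have key : ∀ {a b : ℕ}, a < b → a.choose 2 + a ≤ b.choose 2 := fun h =>
    choose_two_succ _ ▸ Nat.choose_le_choose 2 h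
  rcases lt_trichotomy a b with h | h | h
  · have := key h; omega
  · exact h
  · have := key h; omega

lemma mod_ne_mod_of_lt_of_sub_lt {a b y : ℕ} (hba : b < a) (h : a - b < y) : a % y ≠ b % y := by
  intro heq
  have := Nat.le_of_dvd (by omega) ((Nat.modEq_iff_dvd' hba.le).mp heq.symm)
  omega

lemma sub_sub_one_mod_ne_zero {c m g y : ℕ} (hcg : c ≤ g) (hg : g < c + (m - c - 1) % y) :
    (m - g - 1) % y ≠ 0 := by
  intro h
  have hsum : m - g - 1 + (g - c) = m - c - 1 := by
    have := Nat.mod_le (m - c - 1) y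
    omega
  rw [← hsum, Nat.add_mod, h, zero_add, Nat.mod_mod] at hg
  have := Nat.mod_le (g - c) y
  omega

lemma choose_two_add_sub_mod_eq {η g m : ℕ} (hle : η.choose 2 ≤ g)
    (hlt : g < η.choose 2 + η) (hgm : g < m) :
    η.choose 2 < m - (m - g - 1) % η ∧
      η.choose 2 + (m - (m - g - 1) % η - η.choose 2 - 1) % η = g := by
  have hdiv := Nat.div_add_mod (m - g - 1) η
  have hd := Nat.mod_le (m - g - 1) η
  refine ⟨by omega, ?_⟩
  have hrw : m - (m - g - 1) % η - η.choose 2 - 1 = (g - η.choose 2) + η * ((m - g - 1) / η) := by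
    omega
  rw [hrw, Nat.add_mul_mod_self_left, Nat.mod_eq_of_lt (by omega)]
  omega

lemma mex_eq {S : Set ℕ} {u : ℕ} (hlt : ∀ g < u, g ∈ S) (hu : u ∉ S) : mex S = u :=
  le_antisymm (Nat.sInf_le hu) (le_csInf ⟨u, hu⟩ fun _ hb => not_lt.mp fun h => hb (hlt _ h))

section Hypergraph

variable {n : ℕ} {F : Set (Finset (Fin n))} {x x' y z : Fin n → ℕ}

lemma mval_le_apply (x : Fin n → ℕ) (i : Fin n) : mval x ≤ x i := Nat.sInf_le ⟨i, rfl⟩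

lemma mval_mono (h : ∀ i, x' i ≤ x i) : mval x' ≤ mval x :=
  ciInf_mono (OrderBot.bddBelow _) h

namespace Move

lemma le (h : Move F x x') (i : Fin n) : x' i ≤ x i := by
  obtain ⟨H, -, hlt, heq⟩ := h
  by_cases hi : i ∈ H
  · exact (hlt i hi).le
  · exact (heq i hi).le

lemma sum_lt (h₀ : ∅ ∉ F) (h : Move F x x') : ∑ i, x' i < ∑ i, x i := by
  obtain ⟨H, hH, hlt, -⟩ := id h
  obtain ⟨i, hi⟩ : H.Nonempty := Finset.nonempty_iff_ne_empty.mpr (by rintro rfl; exact h₀ hH)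
  exact Finset.sum_lt_sum (fun i _ => h.le i) ⟨i, Finset.mem_univ i, hlt i hi⟩

lemma mval_le (h : Move F x x') : mval x' ≤ mval x := mval_mono h.le

lemma sub_mval (h : Move F x x') (hm : mval x' = mval x) :
    Move F (fun i => x i - mval x) (fun i => x' i - mval x') := by
  obtain ⟨H, hH, hlt, heq⟩ := h
  refine ⟨H, hH, fun i hi => ?_, fun i hi => by simp [heq i hi, hm]⟩
  have := hm ▸ mval_le_apply x' i
  have := hlt i hi
  simp only [hm]
  omega

end Move

lemma grundy_eq_mex (h₀ : ∅ ∉ F) (x : Fin n → ℕ) :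
    grundy F x = mex {g | ∃ x', Move F x x' ∧ grundy F x' = g} := by
  rw [grundy]
  congr 1
  ext g
  exact ⟨fun ⟨x', ⟨h, _⟩, hg⟩ => ⟨x', h, hg⟩, fun ⟨x', h, hg⟩ => ⟨x', ⟨h, h.sum_lt h₀⟩, hg⟩⟩

lemma grundy_eq_of_forall_move (h₀ : ∅ ∉ F) {U : (Fin n → ℕ) → ℕ}
    (hreach : ∀ x, ∀ g < U x, ∃ x', Move F x x' ∧ U x' = g)
    (hne : ∀ x x', Move F x x' → U x' ≠ U x) (x : Fin n → ℕ) : grundy F x = U x := by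
  induction hs : ∑ i, x i using Nat.strong_induction_on generalizing x with
  | _ s ih =>
  have hmove : ∀ x', Move F x x' → grundy F x' = U x' :=
    fun x' h => ih _ (hs ▸ h.sum_lt h₀) x' rfl
  rw [grundy_eq_mex h₀]
  apply mex_eq
  · intro g hg
    obtain ⟨x', h, rfl⟩ := hreach x g hg
    exact ⟨x', h, hmove x' h⟩
  · rintro ⟨x', h, hg⟩
    exact hne x x' h (hmove x' h ▸ hg)

namespace TetrisReach

lemma mono {N : ℕ} (h : TetrisReach F z N) (hzx : ∀ i, z i ≤ x i) : TetrisReach F x N := by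
  obtain ⟨f, hf, hs⟩ := h
  exact ⟨f, hf, fun j hj i => (hs j hj i).trans (hzx i)⟩

lemma cons {H : Finset (Fin n)} {N : ℕ} (hH : H ∈ F)
    (hx : ∀ i, (if i ∈ H then 1 else 0) + y i ≤ x i) (h : TetrisReach F y N) :
    TetrisReach F x (N + 1) := by
  obtain ⟨f, hf, hs⟩ := h
  refine ⟨fun j => if j = 0 then H else f (j - 1), fun j hj => ?_, fun j hj i => ?_⟩
  · rcases j with _ | j
    · simpa using hH
    · simpa using hf j (by omega)
  · rcases j with _ | j
    · simp only [zero_add, Finset.sum_range_one, ↓reduceIte]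
      exact (Nat.le_add_right _ _).trans (hx i)
    · rw [Finset.sum_range_succ']
      simpa [add_comm] using (Nat.add_le_add_left (hs j (by omega) i) _).trans (hx i)

lemma replicate_add {H : Finset (Fin n)} {N k : ℕ} (hH : H ∈ F) (h : TetrisReach F z N)
    (hx : ∀ i, z i + (if i ∈ H then k else 0) ≤ x i) : TetrisReach F x (N + k) := by
  induction k generalizing x with
  | zero => exact h.mono fun i => by simpa using hx i
  | succ k ih =>
    refine cons (y := fun i => x i - if i ∈ H then 1 else 0) hH (fun i => ?_) (ih fun i => ?_) <;>
    · have := hx i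
      split_ifs at this ⊢ <;> omega

lemma le_sum (h₀ : ∅ ∉ F) {N : ℕ} (h : TetrisReach F x N) : N ≤ ∑ i, x i := by
  obtain ⟨f, hf, hs⟩ := h
  rcases N with _ | N
  · exact Nat.zero_le _
  calc N + 1 = ∑ _l ∈ Finset.range (N + 1), 1 := by simp
  _ ≤ ∑ l ∈ Finset.range (N + 1), (f l).card := Finset.sum_le_sum fun l hl =>
      Finset.card_pos.mpr <| Finset.nonempty_iff_ne_empty.mpr fun he =>
        h₀ (he ▸ hf l (Finset.mem_range.mp hl))
  _ = ∑ i, ∑ l ∈ Finset.range (N + 1), if i ∈ f l then 1 else 0 := by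
      rw [Finset.sum_comm]; simp
  _ ≤ ∑ i, x i := Finset.sum_le_sum fun i _ => hs N N.lt_succ_self i

end TetrisReach

lemma le_tetris (h₀ : ∅ ∉ F) {N : ℕ} (h : TetrisReach F x N) : N ≤ tetris F x :=
  le_csSup ⟨_, fun _ hN => hN.le_sum h₀⟩ h

lemma tetrisReach_tetris (h₀ : ∅ ∉ F) (x : Fin n → ℕ) : TetrisReach F x (tetris F x) :=
  Nat.sSup_mem (s := {N | TetrisReach F x N})
    ⟨0, fun _ => ∅, fun _ h => absurd h (Nat.not_lt_zero _), fun _ h => absurd h (Nat.not_lt_zero _)⟩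
    ⟨_, fun _ hN => TetrisReach.le_sum h₀ hN⟩

lemma tetris_add_le {H : Finset (Fin n)} {k : ℕ} (h₀ : ∅ ∉ F) (hH : H ∈ F)
    (hx : ∀ i, z i + (if i ∈ H then k else 0) ≤ x i) : tetris F z + k ≤ tetris F x :=
  le_tetris h₀ ((tetrisReach_tetris h₀ z).replicate_add hH hx)

lemma Move.tetris_lt (h₀ : ∅ ∉ F) (h : Move F x x') : tetris F x' < tetris F x := by
  obtain ⟨H, hH, hlt, heq⟩ := h
  refine le_tetris h₀ ((tetrisReach_tetris h₀ x').cons hH fun i => ?_)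
  by_cases hi : i ∈ H
  · simpa [hi, add_comm] using hlt i hi
  · simp [hi, heq i hi]

lemma mval_add_yval_le_tetris {H : Finset (Fin n)} (h₀ : ∅ ∉ F) (hH : H ∈ F)
    (x : Fin n → ℕ) : mval x + yval F x ≤ tetris F x + 1 := by
  have := tetris_add_le (z := fun i => x i - mval x) (k := mval x) (x := x) h₀ hH fun i => by
    have := mval_le_apply x i
    split_ifs <;> omega
  unfold yval
  omega

lemma Move.yval_lt (h₀ : ∅ ∉ F) (h : Move F x x') (hm : mval x' = mval x) :
    yval F x' < yval F x :=
  Nat.add_lt_add_right ((h.sub_mval hm).tetris_lt h₀) 1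

lemma Move.sub_mval_lt_yval (h₀ : ∅ ∉ F) (hA0 : TransversalFree F) (h : Move F x x') :
    mval x - mval x' < yval F x' := by
  obtain ⟨H, hH, -, heq⟩ := h
  obtain ⟨H', hH', hdisj⟩ : ∃ H' ∈ F, ¬ (H ∩ H').Nonempty := by
    simpa [IsTransversal] using hA0 H hH
  have := tetris_add_le (z := 0) (k := mval x - mval x') (x := fun i => x' i - mval x') h₀ hH'
    fun i => by
      by_cases hi : i ∈ H'
      · have hiH : i ∉ H := fun hiH => hdisj ⟨i, Finset.mem_inter.mpr ⟨hiH, hi⟩⟩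
        have := mval_le_apply x i
        simp only [hi, if_true, heq i hiH, Pi.zero_apply]
        omega
      · simp [hi]
  unfold yval
  omega

lemma vval_lt_mval (hx : ¬ IsLong F x) : vval F x < mval x := by
  have := Nat.mod_le (mval x - (yval F x).choose 2 - 1) (yval F x)
  unfold IsLong at hx
  unfold vval
  omega

lemma choose_two_le_vval (x : Fin n → ℕ) : (yval F x).choose 2 ≤ vval F x :=
  Nat.le_add_right _ _

lemma vval_lt (x : Fin n → ℕ) : vval F x < (yval F x).choose 2 + yval F x :=
  Nat.add_lt_add_left (Nat.mod_lt _ (Nat.succ_pos _)) _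

lemma jmU_of_isLong (hx : IsLong F x) : jmU F x = tetris F x := if_pos hx

lemma jmU_of_not_isLong (hx : ¬ IsLong F x) : jmU F x = vval F x := if_neg hx

lemma Move.vval_ne (h₀ : ∅ ∉ F) (hA0 : TransversalFree F) (h : Move F x x')
    (hx : ¬ IsLong F x) (hx' : ¬ IsLong F x') : vval F x' ≠ vval F x := by
  intro hv
  have hy : yval F x' = yval F x := eq_of_choose_two_le_lt (choose_two_le_vval x') (vval_lt x')
    (hv ▸ choose_two_le_vval x) (hv ▸ vval_lt x)
  have hm : mval x' < mval x := h.mval_le.lt_of_ne fun hm => (h.yval_lt h₀ hm).ne hy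
  have hgap := h.sub_mval_lt_yval h₀ hA0
  unfold IsLong at hx hx'
  unfold vval at hv
  rw [hy] at hv hx' hgap
  exact mod_ne_mod_of_lt_of_sub_lt (by omega) (by omega) (Nat.add_left_cancel hv).symm

lemma Move.jmU_ne (h₀ : ∅ ∉ F) (hA0 : TransversalFree F) (h : Move F x x') :
    jmU F x' ≠ jmU F x := by
  obtain ⟨H, hH, -⟩ := id h
  by_cases hx : IsLong F x <;> by_cases hx' : IsLong F x'
  · rw [jmU_of_isLong hx, jmU_of_isLong hx']
    exact (h.tetris_lt h₀).ne
  · rw [jmU_of_isLong hx, jmU_of_not_isLong hx']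
    have := vval_lt_mval hx'
    have := h.mval_le
    have := mval_add_yval_le_tetris h₀ hH x
    have : 0 < yval F x := Nat.succ_pos _
    omega
  · rw [jmU_of_not_isLong hx, jmU_of_isLong hx']
    have := vval_lt_mval hx
    have := h.sub_mval_lt_yval h₀ hA0
    have := mval_add_yval_le_tetris h₀ hH x'
    omega
  · rw [jmU_of_not_isLong hx, jmU_of_not_isLong hx']
    exact h.vval_ne h₀ hA0 hx hx'

def ConditionB1 (F : Set (Finset (Fin n))) : Prop :=
  ∀ x : Fin n → ℕ, IsLong F x → ∀ z : ℕ, mval x ≤ z → z < tetris F x →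
    ∃ x', Move F x x' ∧ IsLong F x' ∧ tetris F x' = z

def ConditionC2 (F : Set (Finset (Fin n))) : Prop :=
  ∀ x : Fin n → ℕ, ∀ η : ℕ, 1 ≤ η → η < yval F x →
    ∃ x', Move F x x' ∧ mval x' = mval x ∧ yval F x' = η

def ConditionC3 (F : Set (Finset (Fin n))) : Prop :=
  ∀ x : Fin n → ℕ, ∀ μ η : ℕ, μ < mval x → mval x - μ + 1 ≤ η → η ≤ yval F x →
    ∃ x', Move F x x' ∧ mval x' = μ ∧ yval F x' = η

lemma exists_move_jmU_eq_of_lt_mval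
    (hC2 : ConditionC2 F) (hC3 : ConditionC3 F)
    {g η : ℕ} (hη : 1 ≤ η) (hle : η.choose 2 ≤ g) (hlt : g < η.choose 2 + η)
    (hgm : g < mval x) (hηy : η ≤ yval F x) (hd : (mval x - g - 1) % η = 0 → η < yval F x) :
    ∃ x', Move F x x' ∧ jmU F x' = g := by
  obtain ⟨hshort, hv⟩ := choose_two_add_sub_mod_eq (m := mval x) hle hlt hgm
  have hdη := Nat.mod_lt (mval x - g - 1) hη
  have hdm := Nat.mod_le (mval x - g - 1) η
  obtain ⟨x', h, hm, hy⟩ : ∃ x', Move F x x' ∧ mval x' = mval x - (mval x - g - 1) % η ∧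
      yval F x' = η := by
    rcases Nat.eq_zero_or_pos ((mval x - g - 1) % η) with h0 | h0
    · obtain ⟨x', h, hm, hy⟩ := hC2 x η hη (hd h0)
      exact ⟨x', h, by omega, hy⟩
    · exact hC3 x _ η (by omega) (by omega) hηy
  refine ⟨x', h, ?_⟩
  rw [jmU_of_not_isLong (by rw [IsLong, hm, hy]; exact not_le.mpr hshort), vval, hm, hy, hv]

lemma exists_move_jmU_eq
    (hB1 : ConditionB1 F) (hC2 : ConditionC2 F) (hC3 : ConditionC3 F)
    (x : Fin n → ℕ) (g : ℕ) (hg : g < jmU F x) : ∃ x', Move F x x' ∧ jmU F x' = g := by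
  obtain ⟨η, hη, hle, hlt⟩ := exists_choose_two_le_lt g
  by_cases hx : IsLong F x
  · rw [jmU_of_isLong hx] at hg
    rcases lt_or_ge g (mval x) with hgm | hgm
    · have hηy : η < yval F x := by
        by_contra! hyη
        have := Nat.choose_le_choose 2 hyη
        unfold IsLong at hx
        omega
      exact exists_move_jmU_eq_of_lt_mval hC2 hC3 hη hle hlt hgm hηy.le fun _ => hηy
    · obtain ⟨x', h, hlong, hT⟩ := hB1 x hx g hgm hg
      exact ⟨x', h, by rw [jmU_of_isLong hlong, hT]⟩
  · rw [jmU_of_not_isLong hx] at hg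
    have := vval_lt_mval hx
    have hηy : η ≤ yval F x := by
      by_contra! hyη
      have := Nat.choose_le_choose 2 (Nat.succ_le_of_lt hyη)
      rw [choose_two_succ] at this
      have := vval_lt (F := F) x
      omega
    refine exists_move_jmU_eq_of_lt_mval hC2 hC3 hη hle hlt (by omega) hηy fun hd =>
      hηy.lt_of_ne fun hηeq => ?_
    subst hηeq
    exact sub_sub_one_mod_ne_zero hle hg hd

end Hypergraph

theorem isJM_of_conditions_general
    (n : ℕ) (F : Set (Finset (Fin n))) (hnem : ∅ ∉ F)
    (hA0 : TransversalFree F)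
    (hB1 : ∀ x : Fin n → ℕ, IsLong F x → ∀ z : ℕ, mval x ≤ z → z < tetris F x →
      ∃ x', Move F x x' ∧ IsLong F x' ∧ tetris F x' = z)
    (hC2 : ∀ x : Fin n → ℕ, ∀ η : ℕ, 1 ≤ η → η < yval F x →
      ∃ x', Move F x x' ∧ mval x' = mval x ∧ yval F x' = η)
    (hC3 : ∀ x : Fin n → ℕ, ∀ μ η : ℕ, μ < mval x → mval x - μ + 1 ≤ η → η ≤ yval F x →
      ∃ x', Move F x x' ∧ mval x' = μ ∧ yval F x' = η) :
    IsJM F :=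
  grundy_eq_of_forall_move hnem (exists_move_jmU_eq hB1 hC2 hC3)
    fun _ _ h => h.jmU_ne hnem hA0

/-- Lemma (sufficient conditions for JM): if (A0), (B1), (C2), (C3) hold,
then `𝓗` is a JM hypergraph. -/
theorem isJM_of_conditions
    (n : ℕ) (F : Set (Finset (Fin n))) (hne : F.Nonempty) (hnem : ∅ ∉ F)
    (hA0 : TransversalFree F)
    (hB1 : ∀ x : Fin n → ℕ, IsLong F x → ∀ z : ℕ, mval x ≤ z → z < tetris F x →
      ∃ x', Move F x x' ∧ IsLong F x' ∧ tetris F x' = z)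
    (hC2 : ∀ x : Fin n → ℕ, ∀ η : ℕ, 1 ≤ η → η < yval F x →
      ∃ x', Move F x x' ∧ mval x' = mval x ∧ yval F x' = η)
    (hC3 : ∀ x : Fin n → ℕ, ∀ μ η : ℕ, μ < mval x → mval x - μ + 1 ≤ η → η ≤ yval F x →
      ∃ x', Move F x x' ∧ mval x' = μ ∧ yval F x' = η) :
    IsJM F :=
  isJM_of_conditions_general n F hnem hA0 hB1 hC2 hC3
end
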